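/- arXiv:1301.3659 — 3 statements merged into one kernel-verified Lean document; each statement's English description precedes it below -/
import Mathlib

section
/- For every real number s > 1, the Riemann zeta function satisfies ζ(s) = lim_{q→∞} (π/(2q))^s · Σ_{p=1}^{q} cot^s(pπ/(2q+1)). -/
/-!
Writing `p = n + 1`, the `n`-th summand is `((π / (2q)) cot ((n + 1)π / (2q + 1)))^s`. Since
`x cot x → 1` as `x → 0`, it tends to `(n + 1)^(-s)`, and since `cot x < 1 / x` on `(0, π / 2)`, it
is bounded by `(3 / 2)^s (n + 1)^(-s)` uniformly in `q`. Tannery's theorem then lets the limit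
pass through the sum.
-/

open Real Filter Finset Topology

lemma tendsto_sum_range_of_dominated_convergence {G : Type*} [NormedAddCommGroup G]
    [CompleteSpace G] {f : ℕ → ℕ → G} {g : ℕ → G} {bound : ℕ → ℝ} (h_sum : Summable bound)
    (hab : ∀ k, Tendsto (f · k) atTop (𝓝 (g k))) (h_bound : ∀ n, ∀ k < n, ‖f n k‖ ≤ bound k) :
    Tendsto (fun n ↦ ∑ k ∈ range n, f n k) atTop (𝓝 (∑' k, g k)) := by
  have h_tsum (n : ℕ) : ∑ k ∈ range n, f n k = ∑' k, if k < n then f n k else 0 := by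
    rw [tsum_eq_sum (s := range n) (by simp_all), sum_congr rfl]
    intro k hk
    rw [if_pos (mem_range.1 hk)]
  simp only [h_tsum]
  refine tendsto_tsum_of_dominated_convergence h_sum (fun k ↦ ?_) (.of_forall fun n k ↦ ?_)
  · refine (hab k).congr' ?_
    filter_upwards [eventually_gt_atTop k] with n hn
    rw [if_pos hn]
  · split_ifs with hk
    · exact h_bound n k hk
    · simpa using (norm_nonneg _).trans (h_bound (k + 1) k k.lt_succ_self)

namespace Real

lemma cot_pos_of_mem_Ioo {x : ℝ} (h0 : 0 < x) (h : x < π / 2) : 0 < cot x := by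
  rw [← tan_inv_eq_cot]
  exact inv_pos.2 (tan_pos_of_pos_of_lt_pi_div_two h0 h)

lemma cot_lt_inv {x : ℝ} (h0 : 0 < x) (h : x < π / 2) : cot x < x⁻¹ := by
  rw [← tan_inv_eq_cot]
  exact inv_strictAnti₀ h0 (lt_tan h0 h)

lemma tendsto_mul_cot_nhdsNE_zero : Tendsto (fun x ↦ x * cot x) (𝓝[≠] 0) (𝓝 1) := by
  have h : Tendsto (cos / sinc) (𝓝 0) (𝓝 1) := by
    simpa using (continuous_cos.tendsto 0).div (continuous_sinc.tendsto 0) (by simp)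
  refine (h.mono_left nhdsWithin_le_nhds).congr' ?_
  filter_upwards [self_mem_nhdsWithin] with x hx
  rw [Pi.div_apply, sinc_of_ne_zero hx, cot_eq_cos_div_sin]
  field_simp

end Real

noncomputable def scaledCot (q : ℕ) (k : ℝ) : ℝ := π / (2 * q) * cot (k * π / (2 * q + 1))

section scaledCot

variable {q : ℕ} {k : ℝ}

lemma mul_pi_div_two_mul_add_one_mem_Ioo (hk : 0 < k) (hkq : k ≤ q) :
    k * π / (2 * q + 1) ∈ Set.Ioo 0 (π / 2) := by
  refine ⟨by positivity, ?_⟩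
  rw [div_lt_div_iff₀ (by positivity) two_pos]
  nlinarith [pi_pos]

lemma scaledCot_nonneg (hk : 0 < k) (hkq : k ≤ q) : 0 ≤ scaledCot q k := by
  obtain ⟨h0, h1⟩ := mul_pi_div_two_mul_add_one_mem_Ioo hk hkq
  exact mul_nonneg (by positivity) (cot_pos_of_mem_Ioo h0 h1).le

lemma scaledCot_le (hk : 0 < k) (hkq : k ≤ q) : scaledCot q k ≤ 3 / 2 * k⁻¹ := by
  obtain ⟨h0, h1⟩ := mul_pi_div_two_mul_add_one_mem_Ioo hk hkq
  have hq : (1 : ℝ) ≤ q := Nat.one_le_cast.2 (Nat.cast_pos.1 (hk.trans_le hkq))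
  calc scaledCot q k ≤ π / (2 * q) * (k * π / (2 * q + 1))⁻¹ :=
        mul_le_mul_of_nonneg_left (cot_lt_inv h0 h1).le (by positivity)
    _ = (1 + (2 * (q : ℝ))⁻¹) * k⁻¹ := by field_simp
    _ ≤ 3 / 2 * k⁻¹ := by
        have : (2 * (q : ℝ))⁻¹ ≤ 2⁻¹ := inv_anti₀ two_pos (by linarith)
        gcongr
        linarith

lemma tendsto_scaledCot (hk : 0 < k) : Tendsto (scaledCot · k) atTop (𝓝 k⁻¹) := by
  have h_two_mul : Tendsto (fun q : ℕ ↦ 2 * (q : ℝ)) atTop atTop :=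
    tendsto_natCast_atTop_atTop.const_mul_atTop two_pos
  have h_arg : Tendsto (fun q : ℕ ↦ k * π / (2 * q + 1)) atTop (𝓝[≠] 0) :=
    tendsto_nhdsWithin_of_tendsto_nhds_of_eventually_within _
      (tendsto_const_nhds.div_atTop (tendsto_atTop_add_const_right _ 1 h_two_mul))
      (.of_forall fun q ↦ (by positivity : 0 < k * π / (2 * q + 1)).ne')
  have h_ratio : Tendsto (fun q : ℕ ↦ 1 + (2 * (q : ℝ))⁻¹) atTop (𝓝 1) := by
    simpa using tendsto_const_nhds.add h_two_mul.inv_tendsto_atTop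
  have h := (h_ratio.mul_const k⁻¹).mul (tendsto_mul_cot_nhdsNE_zero.comp h_arg)
  rw [one_mul, mul_one] at h
  refine h.congr' ?_
  filter_upwards [eventually_ne_atTop 0] with q hq
  simp only [Function.comp_apply, scaledCot]
  field_simp

lemma rpow_mul_sum_cot_rpow_eq_sum_scaledCot_rpow (s : ℝ) (q : ℕ) :
    (π / (2 * q)) ^ s * ∑ p ∈ Icc 1 q, cot (p * π / (2 * q + 1)) ^ s =
      ∑ n ∈ range q, scaledCot q (n + 1) ^ s := by
  rw [mul_sum, ← Ico_add_one_right_eq_Icc, sum_Ico_eq_sum_range, add_tsub_cancel_right]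
  refine sum_congr rfl fun n hn ↦ ?_
  have hnq : (n : ℝ) + 1 ≤ q := by exact_mod_cast mem_range.1 hn
  obtain ⟨h0, h1⟩ := mul_pi_div_two_mul_add_one_mem_Ioo n.cast_add_one_pos hnq
  rw [scaledCot, mul_rpow (by positivity) (cot_pos_of_mem_Ioo h0 h1).le]
  push_cast
  ring_nf

end scaledCot

theorem zeta_cot_limit_2q (s : ℝ) (hs : 1 < s) :
    Tendsto (fun q : ℕ =>
        (π / (2 * q)) ^ s * ∑ p ∈ Finset.Icc 1 q, (Real.cot (p * π / (2 * q + 1))) ^ s)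
      atTop (nhds (∑' n : ℕ, 1 / ((n : ℝ) + 1) ^ s)) := by
  have hs0 : 0 ≤ s := by linarith
  have h_zeta (n : ℕ) : 1 / ((n : ℝ) + 1) ^ s = ((n : ℝ) + 1)⁻¹ ^ s := by
    rw [one_div, inv_rpow n.cast_add_one_pos.le]
  have h_sum : Summable fun n : ℕ ↦ ((n : ℝ) + 1)⁻¹ ^ s := by
    simpa [← h_zeta] using (summable_nat_add_iff 1).2 (summable_one_div_nat_rpow.2 hs)
  simp_rw [rpow_mul_sum_cot_rpow_eq_sum_scaledCot_rpow, h_zeta]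
  refine tendsto_sum_range_of_dominated_convergence (h_sum.mul_left ((3 / 2) ^ s))
    (fun n ↦ (tendsto_scaledCot n.cast_add_one_pos).rpow_const (.inr hs0)) fun q n hn ↦ ?_
  have hnq : (n : ℝ) + 1 ≤ q := by exact_mod_cast hn
  rw [norm_of_nonneg (rpow_nonneg (scaledCot_nonneg n.cast_add_one_pos hnq) s),
    ← mul_rpow (by norm_num) (by positivity)]
  exact rpow_le_rpow (scaledCot_nonneg n.cast_add_one_pos hnq)
    (scaledCot_le n.cast_add_one_pos hnq) hs0
end

section
/- For every real number s > 1, ζ(s) = lim_{q→∞} (π/(2q))^s · Σ_{p=1}^{q} csc^s(pπ/(2q+1)). -/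
open Real Filter Finset

/-!
Since `sin x ~ x` at `0`, the `p`-th term `(π / (2q)) csc (pπ / (2q + 1))` tends to `1 / p`, and
Jordan's inequality `sin x ≥ 2x / π` on `[0, π / 2]` bounds it by `(3π / 4) / p` for all `q ≥ p`.
After raising to the power `s > 1` this bound is summable, so Tannery's theorem (dominated
convergence for series) lets the limit pass inside the sum.
-/

theorem Finset.sum_Icc_one_eq_tsum_ite {M : Type*} [AddCommMonoid M] [TopologicalSpace M]
    (f : ℕ → M) (q : ℕ) :
    ∑ p ∈ Icc 1 q, f p = ∑' n, if n < q then f (n + 1) else 0 := by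
  rw [tsum_eq_sum (s := range q) fun n hn => if_neg (by simpa using hn),
    ← Finset.sum_filter, Finset.filter_true_of_mem fun n hn => by simpa using hn,
    Finset.range_eq_Ico, Finset.sum_Ico_add', zero_add, Finset.Ico_add_one_right_eq_Icc]

theorem Real.summable_div_nat_add_one_rpow {c s : ℝ} (hc : 0 ≤ c) (hs : 1 < s) :
    Summable fun n : ℕ => (c / (n + 1)) ^ s := by
  refine (((summable_nat_add_iff 1).2 (summable_one_div_nat_rpow.2 hs)).mul_left
    (c ^ s)).congr fun n => ?_
  push_cast
  rw [mul_one_div, ← div_rpow hc (by positivity)]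

noncomputable def cscTerm (q : ℕ) (k : ℝ) : ℝ :=
  π / (2 * q) * (sin (k * π / (2 * q + 1)))⁻¹

section cscTerm

variable {q : ℕ} {k : ℝ}

theorem sin_mul_pi_div_two_mul_add_one_nonneg (hk : 0 ≤ k) (hkq : k ≤ q) :
    0 ≤ sin (k * π / (2 * q + 1)) := by
  refine sin_nonneg_of_nonneg_of_le_pi (by positivity) ?_
  rw [div_le_iff₀ (by positivity)]
  nlinarith [pi_pos]

theorem cscTerm_nonneg (hk : 0 ≤ k) (hkq : k ≤ q) : 0 ≤ cscTerm q k :=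
  mul_nonneg (by positivity) (inv_nonneg.2 (sin_mul_pi_div_two_mul_add_one_nonneg hk hkq))

theorem cscTerm_le (hk : 0 < k) (hkq : k ≤ q) : cscTerm q k ≤ 3 * π / 4 / k := by
  have hq : (1 : ℝ) ≤ q := Nat.one_le_cast.2 (by exact_mod_cast hk.trans_le hkq)
  have hx0 : 0 < k * π / (2 * q + 1) := by positivity
  have hx1 : k * π / (2 * q + 1) ≤ π / 2 := by
    rw [div_le_div_iff₀ (by positivity) two_pos]
    nlinarith [pi_pos]
  have hjordan : 2 * k / (2 * q + 1) ≤ sin (k * π / (2 * q + 1)) := by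
    convert mul_le_sin hx0.le hx1 using 1
    field_simp
  calc cscTerm q k ≤ π / (2 * q) * (2 * k / (2 * q + 1))⁻¹ :=
        mul_le_mul_of_nonneg_left (inv_anti₀ (by positivity) hjordan) (by positivity)
    _ = π * (2 * q + 1) / (4 * q * k) := by field_simp; ring
    _ ≤ 3 * π / 4 / k := by
        rw [div_div, div_le_div_iff₀ (by positivity) (by positivity)]
        nlinarith [mul_nonneg (mul_nonneg pi_pos.le hk.le) (sub_nonneg.2 hq)]

theorem cscTerm_eq_div_sinc (hk : k ≠ 0) (hq : q ≠ 0) :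
    cscTerm q k = (1 + (2 * q : ℝ)⁻¹) / (k * sinc (k * π / (2 * q + 1))) := by
  have : (q : ℝ) ≠ 0 := by exact_mod_cast hq
  rw [cscTerm, sinc_of_ne_zero (by positivity)]
  field_simp

theorem tendsto_cscTerm (hk : k ≠ 0) : Tendsto (cscTerm · k) atTop (nhds k⁻¹) := by
  have hlin : Tendsto (fun q : ℕ => 2 * (q : ℝ)) atTop atTop :=
    tendsto_natCast_atTop_atTop.const_mul_atTop two_pos
  have hnum : Tendsto (fun q : ℕ => 1 + (2 * q : ℝ)⁻¹) atTop (nhds 1) := by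
    simpa using tendsto_const_nhds.add hlin.inv_tendsto_atTop
  have harg : Tendsto (fun q : ℕ => k * π / (2 * q + 1)) atTop (nhds 0) :=
    tendsto_const_nhds.div_atTop (tendsto_atTop_add_const_right _ 1 hlin)
  have hsinc : Tendsto (fun q : ℕ => sinc (k * π / (2 * q + 1))) atTop (nhds 1) :=
    (continuous_sinc.tendsto' 0 1 sinc_zero).comp harg
  have := hnum.div (hsinc.const_mul k) (by simpa using hk)
  rw [one_div, mul_one] at this
  exact this.congr' <| (eventually_ne_atTop 0).mono fun q hq => (cscTerm_eq_div_sinc hk hq).symm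

end cscTerm

theorem zeta_csc_limit_2q (s : ℝ) (hs : 1 < s) :
    Tendsto (fun q : ℕ =>
        (π / (2 * q)) ^ s * ∑ p ∈ Finset.Icc 1 q, ((Real.sin (p * π / (2 * q + 1)))⁻¹) ^ s)
      atTop (nhds (∑' n : ℕ, 1 / ((n : ℝ) + 1) ^ s)) := by
  have hs0 : 0 ≤ s := by linarith
  have hsum_eq (q : ℕ) :
      (π / (2 * q)) ^ s * ∑ p ∈ Icc 1 q, ((sin (p * π / (2 * q + 1)))⁻¹) ^ s =
        ∑' n : ℕ, if n < q then cscTerm q (n + 1) ^ s else 0 := by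
    rw [mul_sum, sum_Icc_one_eq_tsum_ite]
    refine tsum_congr fun n => ?_
    split_ifs with hn
    · have hnq : (n : ℝ) + 1 ≤ q := by exact_mod_cast hn
      push_cast
      exact (mul_rpow (by positivity) <| inv_nonneg.2 <|
        sin_mul_pi_div_two_mul_add_one_nonneg (by positivity) hnq).symm
    · rfl
  have hlim (n : ℕ) : Tendsto (fun q : ℕ => if n < q then cscTerm q (n + 1) ^ s else 0) atTop
      (nhds (1 / ((n : ℝ) + 1) ^ s)) := by
    rw [one_div, ← inv_rpow (by positivity)]
    exact ((tendsto_cscTerm (by positivity)).rpow_const (Or.inr hs0)).congr' <|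
      (eventually_gt_atTop n).mono fun q hq => (if_pos hq).symm
  have hbound (q n : ℕ) :
      ‖if n < q then cscTerm q (n + 1) ^ s else 0‖ ≤ (3 * π / 4 / (n + 1)) ^ s := by
    split_ifs with hn
    · have hnq : (n : ℝ) + 1 ≤ q := by exact_mod_cast hn
      have hnonneg := cscTerm_nonneg (by positivity) hnq
      rw [norm_of_nonneg (rpow_nonneg hnonneg s)]
      exact rpow_le_rpow hnonneg (cscTerm_le (by positivity) hnq) hs0
    · simpa using rpow_nonneg (by positivity) s
  simpa only [hsum_eq] using tendsto_tsum_of_dominated_convergence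
    (summable_div_nat_add_one_rpow (by positivity) hs) hlim (Eventually.of_forall hbound)
end

section
/- Let m, n be fixed nonnegative integers and s > 1 a real number. Then lim_{q→∞} (π/(2q+m))^s · Σ_{p=1}^{⌊(2q+n−1)/2⌋} cot^s(pπ/(2q+n)) = ζ(s), where the limit is over positive integers q (with q ≥ 2 if n = 0). -/
open Real Filter Finset Topology

/-! By Tannery's theorem (dominated convergence for series). The `k`-th summand,
`(π/(2q+m) · cot((k+1)π/(2q+n)))^s`, tends to `(k+1)^(-s)` because `x cot x = cos x / sinc x → 1`
as `x → 0`; and `cot x < 1/x` on `(0, π/2)` bounds it by `((1+n)/(k+1))^s` uniformly in `q ≥ 1`,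
which is summable since `s > 1`. -/

namespace Real

lemma cot_eq_inv_tan (x : ℝ) : cot x = (tan x)⁻¹ := by
  rw [cot_eq_cos_div_sin, tan_eq_sin_div_cos, inv_div]

lemma cot_pos_of_pos_of_lt_pi_div_two {x : ℝ} (h0 : 0 < x) (h1 : x < π / 2) : 0 < cot x := by
  rw [cot_eq_inv_tan]
  exact inv_pos.2 (tan_pos_of_pos_of_lt_pi_div_two h0 h1)

lemma cot_lt_inv_of_pos_of_lt_pi_div_two {x : ℝ} (h0 : 0 < x) (h1 : x < π / 2) :
    cot x < x⁻¹ := by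
  rw [cot_eq_inv_tan]
  exact inv_strictAnti₀ h0 (lt_tan h0 h1)

lemma mul_cot_eq_cos_div_sinc {x : ℝ} (hx : x ≠ 0) : x * cot x = cos x / sinc x := by
  rw [sinc_of_ne_zero hx, cot_eq_cos_div_sin]
  field_simp

lemma tendsto_cos_div_sinc_nhds_zero : Tendsto (fun x => cos x / sinc x) (𝓝 0) (𝓝 1) := by
  have h := (continuous_cos.tendsto 0).div (continuous_sinc.tendsto 0) (by simp)
  rwa [cos_zero, sinc_zero, div_one] at h

end Real

lemma tendsto_atTop_two_mul_natCast_add (a : ℝ) :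
    Tendsto (fun q : ℕ => 2 * (q : ℝ) + a) atTop atTop :=
  tendsto_atTop_add_const_right _ a (tendsto_natCast_atTop_atTop.const_mul_atTop two_pos)

lemma tendsto_div_two_mul_add_mul_cot (a b : ℝ) {p : ℝ} (hp : 0 < p) :
    Tendsto (fun q : ℕ => π / (2 * q + a) * cot (p * π / (2 * q + b))) atTop (𝓝 p⁻¹) := by
  have hx : Tendsto (fun q : ℕ => p * π / (2 * q + b)) atTop (𝓝 0) :=
    tendsto_const_nhds.div_atTop (tendsto_atTop_two_mul_natCast_add b)
  have hratio : Tendsto (fun q : ℕ => (2 * q + b) / (2 * q + a)) atTop (𝓝 1) := by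
    simpa [add_comm] using tendsto_add_mul_div_add_mul_atTop_nhds b a 2 two_ne_zero
  have hlim := ((tendsto_cos_div_sinc_nhds_zero.comp hx).mul hratio).div_const p
  rw [one_mul, one_div] at hlim
  refine hlim.congr' ?_
  filter_upwards [(tendsto_atTop_two_mul_natCast_add a).eventually_gt_atTop 0,
    (tendsto_atTop_two_mul_natCast_add b).eventually_gt_atTop 0] with q ha hb
  have hx0 : p * π / (2 * q + b) ≠ 0 := by positivity
  simp only [Function.comp_apply, ← mul_cot_eq_cos_div_sinc hx0]
  field_simp

lemma mul_pi_div_mem_Ioo {p N : ℝ} (hp : 0 < p) (hpN : 2 * p < N) :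
    p * π / N ∈ Set.Ioo 0 (π / 2) := by
  have hN : 0 < N := by linarith
  refine ⟨by positivity, ?_⟩
  rw [div_lt_div_iff₀ hN two_pos]
  nlinarith [pi_pos]

noncomputable def cotSumTerm (m n : ℕ) (s : ℝ) (q k : ℕ) : ℝ :=
  if k < (2 * q + n - 1) / 2 then
    (π / (2 * q + m)) ^ s * cot (↑(k + 1) * π / (2 * q + n)) ^ s
  else 0

section cotSumTerm

variable {m n : ℕ} {s : ℝ} {q k : ℕ}

lemma cotSumTerm_arg_mem_Ioo (h : k < (2 * q + n - 1) / 2) :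
    (↑(k + 1) * π / (2 * q + n) : ℝ) ∈ Set.Ioo 0 (π / 2) :=
  mul_pi_div_mem_Ioo (by positivity) (by exact_mod_cast (by omega : 2 * (k + 1) < 2 * q + n))

lemma cotSumTerm_of_lt (h : k < (2 * q + n - 1) / 2) :
    cotSumTerm m n s q k = (π / (2 * q + m) * cot (↑(k + 1) * π / (2 * q + n))) ^ s := by
  obtain ⟨h0, h1⟩ := cotSumTerm_arg_mem_Ioo h
  rw [cotSumTerm, if_pos h, mul_rpow (by positivity) (cot_pos_of_pos_of_lt_pi_div_two h0 h1).le]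

lemma mul_sum_Icc_eq_tsum_cotSumTerm (m n : ℕ) (s : ℝ) (q : ℕ) :
    (π / (2 * q + m)) ^ s * ∑ p ∈ Icc 1 ((2 * q + n - 1) / 2), cot (p * π / (2 * q + n)) ^ s =
      ∑' k, cotSumTerm m n s q k := by
  rw [tsum_eq_sum (f := cotSumTerm m n s q) (s := range ((2 * q + n - 1) / 2))
    fun k hk => if_neg (by simpa using hk), mul_sum, ← Ico_add_one_right_eq_Icc, sum_Ico_eq_sum_range, Nat.add_sub_cancel]
  refine sum_congr rfl fun k hk => ?_
  rw [cotSumTerm, if_pos (by simpa using hk), add_comm 1 k]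

lemma tendsto_cotSumTerm (m n : ℕ) (s : ℝ) (k : ℕ) :
    Tendsto (fun q => cotSumTerm m n s q k) atTop (𝓝 (1 / (↑(k + 1) : ℝ) ^ s)) := by
  have hlim := (tendsto_div_two_mul_add_mul_cot m n (p := ↑(k + 1)) (by positivity)).rpow_const
    (p := s) (Or.inl (by positivity))
  rw [inv_rpow (by positivity), ← one_div] at hlim
  refine hlim.congr' ?_
  filter_upwards [eventually_gt_atTop (k + 1)] with q hq
  exact (cotSumTerm_of_lt (by omega)).symm

lemma norm_cotSumTerm_le (hq : 1 ≤ q) (hs : 0 ≤ s) (k : ℕ) :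
    ‖cotSumTerm m n s q k‖ ≤ (1 + n) ^ s * (1 / (↑(k + 1) : ℝ) ^ s) := by
  by_cases h : k < (2 * q + n - 1) / 2
  · obtain ⟨h0, h1⟩ := cotSumTerm_arg_mem_Ioo h
    have hq' : (1 : ℝ) ≤ q := by exact_mod_cast hq
    have hcot := cot_pos_of_pos_of_lt_pi_div_two h0 h1
    have key : π / (2 * q + m) * cot (↑(k + 1) * π / (2 * q + n)) ≤ (1 + n) / ↑(k + 1) :=
      calc π / (2 * q + m) * cot (↑(k + 1) * π / (2 * q + n))
          ≤ π / (2 * q + m) * (↑(k + 1) * π / (2 * q + n))⁻¹ := by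
            gcongr; exact (cot_lt_inv_of_pos_of_lt_pi_div_two h0 h1).le
        _ = (2 * q + n) / ((2 * q + m) * ↑(k + 1)) := by field_simp
        _ ≤ (1 + n) / ↑(k + 1) := by
            have hn : (0 : ℝ) ≤ n := n.cast_nonneg
            have hnum : (2 * q + n : ℝ) ≤ (1 + n) * (2 * q + m) := by nlinarith
            rw [div_le_div_iff₀ (by positivity) (by positivity), ← mul_assoc]
            exact mul_le_mul_of_nonneg_right hnum (by positivity)
    rw [cotSumTerm_of_lt h, Real.norm_of_nonneg (by positivity)]
    calc _ ≤ ((1 + n) / (↑(k + 1) : ℝ)) ^ s := rpow_le_rpow (by positivity) key hs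
      _ = _ := by rw [div_rpow (by positivity) (by positivity), mul_one_div]
  · rw [cotSumTerm, if_neg h, norm_zero]
    positivity

end cotSumTerm

theorem zeta_cot_limit_general (m n : ℕ) (s : ℝ) (hs : 1 < s) :
    Tendsto (fun q : ℕ =>
        (π / (2 * q + m)) ^ s *
          ∑ p ∈ Finset.Icc 1 ((2 * q + n - 1) / 2), (Real.cot (p * π / (2 * q + n))) ^ s)
      atTop (nhds (∑' k : ℕ, 1 / ((k : ℝ) + 1) ^ s)) := by
  have hsum : Summable fun k : ℕ => 1 / (↑(k + 1) : ℝ) ^ s :=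
    (summable_nat_add_iff 1).mpr (summable_one_div_nat_rpow.mpr hs)
  have hlim := tendsto_tsum_of_dominated_convergence (hsum.mul_left ((1 + n : ℝ) ^ s))
    (tendsto_cotSumTerm m n s)
    (eventually_atTop.2 ⟨1, fun q hq => norm_cotSumTerm_le hq (by linarith)⟩)
  push_cast at hlim
  simpa only [mul_sum_Icc_eq_tsum_cotSumTerm] using hlim
end
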